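/- Let L ≥ 1 and let W(θ) := ∑_{ℓ=1}^L a_ℓ cos(ℓθ) with a₁ > a₂ > ⋯ > a_L > 0. Let κ > 2/a_L and suppose r > 0 satisfies the fixed-point equation r = I₁(κ a_L r)/I₀(κ a_L r). Define π(θ) := exp(κ a_L r cos(Lθ)) / I₀(κ a_L r). Then π is a strictly positive, even, 2π-periodic, continuously differentiable function with (1/2π)∫₀^{2π} π(θ)dθ = 1, and π solves the stationary McKean–Vlasov equation: π′(θ) = κ (W⋆π)′(θ) π(θ) for all θ ∈ ℝ. In particular π is a nontrivial 'Kuramoto-type' stationary solution. -/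

import Mathlib

open scoped BigOperators
open Filter Topology Real

noncomputable section

def besselI (n : ℕ) (x : ℝ) : ℝ :=
  (1 / (2 * π)) * ∫ φ in (0:ℝ)..(2 * π), Real.exp (x * Real.cos φ) * Real.cos ((n : ℝ) * φ)

def Wfin (L : ℕ) (a : ℕ → ℝ) (θ : ℝ) : ℝ :=
  ∑ ℓ ∈ Finset.Icc 1 L, a ℓ * Real.cos ((ℓ : ℝ) * θ)

def circConv (W p : ℝ → ℝ) (θ : ℝ) : ℝ :=
  (1 / (2 * π)) * ∫ φ in (0:ℝ)..(2 * π), W (θ - φ) * p φ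

open intervalIntegral Function

/-!
The density depends on `θ` only through `cos (L θ)`, so it is even and `2π/L`-periodic. Evenness
kills its sine coefficients, and rotating by `2π/L` multiplies its `n`-th cosine coefficient by
`cos (2π n / L)`, which is `≠ 1` unless `L ∣ n`; so of the modes of `W` only the `L`-th survives,
with coefficient `I₁(c)/I₀(c)`, `c = κ a_L r`. The fixed-point equation turns this into
`W ⋆ π = a_L r cos (L θ)`, and differentiating `π = exp (c cos (L θ)) / I₀(c)` gives the
stationary equation.
-/

section Periodic

variable {f : ℝ → ℝ} {T : ℝ}

theorem Function.Odd.intervalIntegral_neg_self_eq_zero (hf : f.Odd) (a : ℝ) :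
    ∫ x in -a..a, f x = 0 := by
  have h := integral_comp_neg (a := -a) (b := a) f
  simp only [hf.eq, integral_neg, neg_neg] at h
  linarith

theorem Function.Periodic.intervalIntegral_eq_zero_of_odd (hper : Periodic f T) (hf : f.Odd) :
    ∫ x in 0..T, f x = 0 := by
  have h := hper.intervalIntegral_add_eq 0 (-(T / 2))
  rw [zero_add, show -(T / 2) + T = T / 2 by ring] at h
  rw [h, hf.intervalIntegral_neg_self_eq_zero]

theorem Function.Periodic.intervalIntegral_comp_add_right (hper : Periodic f T) (t : ℝ) :
    ∫ x in 0..T, f (x + t) = ∫ x in 0..T, f x := by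
  rw [integral_comp_add_right, zero_add, add_comm T, hper.intervalIntegral_add_eq t 0, zero_add]

theorem Function.Periodic.intervalIntegral_comp_nat_mul (hper : Periodic f T) (hf : Continuous f)
    {n : ℕ} (hn : n ≠ 0) : ∫ x in 0..T, f (n * x) = ∫ x in 0..T, f x := by
  have hn' : (n : ℝ) ≠ 0 := Nat.cast_ne_zero.2 hn
  have h := hper.intervalIntegral_add_zsmul_eq n 0 fun _ _ ↦ hf.intervalIntegrable _ _
  simp only [zero_add, Int.cast_natCast, zsmul_eq_mul] at h
  rw [integral_comp_mul_left f hn', mul_zero, h, smul_eq_mul, inv_mul_cancel_left₀ hn']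

end Periodic

theorem Real.cos_nat_mul_two_pi_div_ne_one {L n : ℕ} (hL : L ≠ 0) (hn : ¬ L ∣ n) :
    cos (n * (2 * π / L)) ≠ 1 := by
  rw [Ne, Real.cos_eq_one_iff]
  rintro ⟨k, hk⟩
  have hL' : (L : ℝ) ≠ 0 := Nat.cast_ne_zero.2 hL
  have hkL : (k : ℝ) * L = n := by
    field_simp at hk
    linarith [Real.pi_pos]
  exact hn (Int.natCast_dvd_natCast.1 ⟨k, by rw [mul_comm]; exact_mod_cast hkL.symm⟩)

def cosCoeff (n : ℕ) (p : ℝ → ℝ) : ℝ :=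
  (1 / (2 * π)) * ∫ φ in (0:ℝ)..(2 * π), cos (n * φ) * p φ

def sinCoeff (n : ℕ) (p : ℝ → ℝ) : ℝ :=
  (1 / (2 * π)) * ∫ φ in (0:ℝ)..(2 * π), sin (n * φ) * p φ

section Fourier

variable {p : ℝ → ℝ}

theorem besselI_eq_cosCoeff (n : ℕ) (x : ℝ) :
    besselI n x = cosCoeff n fun φ ↦ exp (x * cos φ) := by
  simp only [besselI, cosCoeff, mul_comm]

theorem cosCoeff_div_const (n : ℕ) (k : ℝ) :
    cosCoeff n (fun φ ↦ p φ / k) = cosCoeff n p / k := by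
  simp only [cosCoeff, mul_div_assoc', integral_div]

theorem cosCoeff_comp_nat_mul (hp : Continuous p) (hper : Periodic p (2 * π)) {L : ℕ}
    (hL : L ≠ 0) (m : ℕ) : cosCoeff (m * L) (fun φ ↦ p (L * φ)) = cosCoeff m p := by
  have hper' : Periodic (fun u ↦ cos (m * u) * p u) (2 * π) := fun u ↦ by
    simp only [mul_add, cos_add_nat_mul_two_pi, hper u]
  unfold cosCoeff
  rw [← hper'.intervalIntegral_comp_nat_mul (by fun_prop) hL]
  simp only [Nat.cast_mul, mul_assoc]

theorem integral_sin_nat_mul_mul_eq_zero (hper : Periodic p (2 * π)) (heven : p.Even) (n : ℕ) :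
    ∫ φ in (0:ℝ)..(2 * π), sin (n * φ) * p φ = 0 := by
  refine Periodic.intervalIntegral_eq_zero_of_odd (fun φ ↦ ?_) (fun φ ↦ ?_)
  · simp only [mul_add, sin_add_nat_mul_two_pi, hper φ]
  · simp only [mul_neg, sin_neg, heven.eq, neg_mul]

theorem sinCoeff_eq_zero_of_even (hper : Periodic p (2 * π)) (heven : p.Even) (n : ℕ) :
    sinCoeff n p = 0 := by
  rw [sinCoeff, integral_sin_nat_mul_mul_eq_zero hper heven, mul_zero]

theorem cosCoeff_eq_zero_of_not_dvd (hp : Continuous p) {L : ℕ} (hL : L ≠ 0)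
    (hper : Periodic p (2 * π / L)) (heven : p.Even) {n : ℕ} (hn : ¬ L ∣ n) :
    cosCoeff n p = 0 := by
  set t := 2 * π / L
  have hper2 : Periodic p (2 * π) := by
    simpa [t, mul_div_cancel₀ _ (Nat.cast_ne_zero.2 hL : (L : ℝ) ≠ 0)] using hper.nat_mul L
  have hshift : Periodic (fun φ ↦ cos (n * φ) * p φ) (2 * π) := fun φ ↦ by
    simp only [mul_add, cos_add_nat_mul_two_pi, hper2 φ]
  set I := ∫ φ in (0:ℝ)..(2 * π), cos (n * φ) * p φ
  have hI : I = cos (n * t) * I := by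
    calc I = ∫ φ in (0:ℝ)..(2 * π), cos (n * (φ + t)) * p (φ + t) :=
          (hshift.intervalIntegral_comp_add_right t).symm
      _ = ∫ φ in (0:ℝ)..(2 * π),
            cos (n * t) * (cos (n * φ) * p φ) - sin (n * t) * (sin (n * φ) * p φ) := by
          congr 1; ext φ; rw [hper φ, mul_add, cos_add]; ring
      _ = cos (n * t) * I := by
          rw [integral_sub ((by fun_prop : Continuous _).intervalIntegrable _ _)
              ((by fun_prop : Continuous _).intervalIntegrable _ _),
            integral_const_mul, integral_const_mul,
            integral_sin_nat_mul_mul_eq_zero hper2 heven, mul_zero, sub_zero]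
  have hcos := Real.cos_nat_mul_two_pi_div_ne_one hL hn
  have hI0 : I = 0 := by
    by_contra hI0
    exact hcos (mul_right_cancel₀ hI0 (hI.symm.trans (one_mul I).symm))
  show 1 / (2 * π) * I = 0
  rw [hI0, mul_zero]

theorem circConv_Wfin (hp : Continuous p) (L : ℕ) (a : ℕ → ℝ) (θ : ℝ) :
    circConv (Wfin L a) p θ =
      ∑ ℓ ∈ Finset.Icc 1 L, a ℓ * (cos (ℓ * θ) * cosCoeff ℓ p + sin (ℓ * θ) * sinCoeff ℓ p) := by
  have hexpand : ∀ φ, Wfin L a (θ - φ) * p φ = ∑ ℓ ∈ Finset.Icc 1 L,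
      (a ℓ * cos (ℓ * θ) * (cos (ℓ * φ) * p φ) + a ℓ * sin (ℓ * θ) * (sin (ℓ * φ) * p φ)) :=
    fun φ ↦ by
      rw [Wfin, Finset.sum_mul]
      exact Finset.sum_congr rfl fun ℓ _ ↦ by rw [mul_sub, cos_sub]; ring
  have hint : ∀ q : ℝ → ℝ, Continuous q → IntervalIntegrable q MeasureTheory.volume 0 (2 * π) :=
    fun q hq ↦ hq.intervalIntegrable _ _
  simp only [circConv, hexpand, cosCoeff, sinCoeff]
  rw [integral_finsetSum fun ℓ _ ↦ hint _ (by fun_prop), Finset.mul_sum]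
  refine Finset.sum_congr rfl fun ℓ _ ↦ ?_
  rw [integral_add (hint _ (by fun_prop)) (hint _ (by fun_prop)), integral_const_mul,
    integral_const_mul]
  ring

end Fourier

theorem besselI_zero_pos (x : ℝ) : 0 < besselI 0 x := by
  rw [besselI_eq_cosCoeff, cosCoeff]
  refine mul_pos (by positivity) (intervalIntegral_pos_of_pos
    ((by fun_prop : Continuous _).intervalIntegrable _ _) (fun φ ↦ ?_) two_pi_pos)
  simp [exp_pos]

def vonMises (L : ℕ) (c θ : ℝ) : ℝ :=
  exp (c * cos (L * θ)) / besselI 0 c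

section vonMises

variable {L : ℕ} {c : ℝ}

theorem vonMises_pos (θ : ℝ) : 0 < vonMises L c θ :=
  div_pos (exp_pos _) (besselI_zero_pos c)

theorem vonMises_even : (vonMises L c).Even := fun θ ↦ by
  rw [vonMises, vonMises, mul_neg, cos_neg]

theorem vonMises_periodic : Periodic (vonMises L c) (2 * π) := fun θ ↦ by
  rw [vonMises, vonMises, mul_add, cos_add_nat_mul_two_pi]

theorem vonMises_periodic_two_pi_div (hL : L ≠ 0) : Periodic (vonMises L c) (2 * π / L) :=
  fun θ ↦ by
    rw [vonMises, vonMises, mul_add, mul_div_cancel₀ _ (Nat.cast_ne_zero.2 hL : (L : ℝ) ≠ 0),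
      cos_add_two_pi]

theorem contDiff_vonMises {n : WithTop ℕ∞} : ContDiff ℝ n (vonMises L c) := by
  unfold vonMises
  fun_prop

theorem continuous_vonMises : Continuous (vonMises L c) :=
  (contDiff_vonMises (n := 0)).continuous

theorem hasDerivAt_vonMises (θ : ℝ) :
    HasDerivAt (vonMises L c) (-(c * L * sin (L * θ)) * vonMises L c θ) θ := by
  refine ((((hasDerivAt_id' θ).const_mul (L : ℝ)).cos.const_mul c).exp.div_const
    (besselI 0 c)).congr_deriv ?_
  rw [vonMises]
  ring

theorem cosCoeff_vonMises (hL : L ≠ 0) (m : ℕ) :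
    cosCoeff (m * L) (vonMises L c) = besselI m c / besselI 0 c := by
  rw [show vonMises L c = fun θ ↦ exp (c * cos (L * θ)) / besselI 0 c from rfl, cosCoeff_div_const,
    cosCoeff_comp_nat_mul (p := fun u ↦ exp (c * cos u)) (by fun_prop)
      (fun u ↦ by simp only [cos_add_two_pi]) hL, besselI_eq_cosCoeff m c]

theorem circConv_Wfin_vonMises (hL : L ≠ 0) (a : ℕ → ℝ) (θ : ℝ) :
    circConv (Wfin L a) (vonMises L c) θ = a L * (besselI 1 c / besselI 0 c) * cos (L * θ) := by
  rw [circConv_Wfin continuous_vonMises,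
    Finset.sum_eq_single_of_mem L (Finset.mem_Icc.2 ⟨Nat.one_le_iff_ne_zero.2 hL, le_rfl⟩)]
  · rw [sinCoeff_eq_zero_of_even vonMises_periodic vonMises_even, ← cosCoeff_vonMises hL 1,
      one_mul]
    ring
  · intro ℓ hℓ hne
    obtain ⟨hℓ1, hℓL⟩ := Finset.mem_Icc.1 hℓ
    rw [sinCoeff_eq_zero_of_even vonMises_periodic vonMises_even,
      cosCoeff_eq_zero_of_not_dvd continuous_vonMises hL
        (vonMises_periodic_two_pi_div hL) vonMises_even
        (Nat.not_dvd_of_pos_of_lt hℓ1 (lt_of_le_of_ne hℓL hne))]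
    ring

theorem exists_vonMises_ne (hL : L ≠ 0) (hc : c ≠ 0) (b : ℝ) : ∃ θ, vonMises L c θ ≠ b := by
  by_contra! h
  have h0 := h 0
  have h1 := h (π / L)
  simp only [vonMises, mul_zero, cos_zero, mul_one,
    mul_div_cancel₀ _ (Nat.cast_ne_zero.2 hL : (L : ℝ) ≠ 0), cos_pi, mul_neg_one] at h0 h1
  have := exp_injective ((div_left_inj' (besselI_zero_pos c).ne').1 (h0.trans h1.symm))
  exact hc (by linarith)

end vonMises

theorem kuramoto_branch_general
    (L : ℕ) (hL : 1 ≤ L) (a : ℕ → ℝ)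
    (hposL : 0 < a L)
    (κ : ℝ) (hκ : 2 / a L < κ)
    (r : ℝ) (hr : 0 < r)
    (hfix : r = besselI 1 (κ * a L * r) / besselI 0 (κ * a L * r)) :
    let piF : ℝ → ℝ := fun θ => Real.exp (κ * a L * r * Real.cos ((L : ℝ) * θ))
      / besselI 0 (κ * a L * r)
    (∀ θ : ℝ, 0 < piF θ) ∧
    (∀ θ : ℝ, piF (-θ) = piF θ) ∧
    Function.Periodic piF (2 * π) ∧
    ContDiff ℝ 1 piF ∧
    (1 / (2 * π)) * (∫ θ in (0:ℝ)..(2 * π), piF θ) = 1 ∧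
    (∀ θ : ℝ, deriv piF θ = κ * deriv (circConv (Wfin L a) piF) θ * piF θ) ∧
    (∃ θ : ℝ, piF θ ≠ 1) := by
  intro piF
  have hL0 : L ≠ 0 := Nat.one_le_iff_ne_zero.1 hL
  set c := κ * a L * r
  have hcpos : 0 < c := mul_pos (mul_pos ((div_pos two_pos hposL).trans hκ) hposL) hr
  have hpiF : piF = vonMises L c := rfl
  have hconv : circConv (Wfin L a) piF = fun θ ↦ a L * r * cos (L * θ) := by
    ext θ
    rw [hpiF, circConv_Wfin_vonMises hL0, ← hfix]
  refine ⟨vonMises_pos, vonMises_even, vonMises_periodic, contDiff_vonMises, ?_, fun θ ↦ ?_,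
    exists_vonMises_ne hL0 hcpos.ne' 1⟩
  · rw [hpiF]
    simpa [cosCoeff, (besselI_zero_pos c).ne'] using cosCoeff_vonMises (c := c) hL0 0
  · have hW := (((hasDerivAt_id' θ).const_mul (L : ℝ)).cos.const_mul (a L * r)).deriv
    rw [hconv, hW, hpiF, (hasDerivAt_vonMises θ).deriv]
    ring

/-- for a finite-mode potential with `a₁ > ⋯ > a_L > 0`, `κ > 2/a_L` and `r > 0`
solving the Kuramoto fixed-point equation, the density
`π(θ) = exp(κ a_L r cos(Lθ))/I₀(κ a_L r)` is a nontrivial stationary solution. -/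
theorem kuramoto_branch
    (L : ℕ) (hL : 1 ≤ L) (a : ℕ → ℝ)
    (hdec : ∀ i j : ℕ, 1 ≤ i → i < j → j ≤ L → a j < a i)
    (hposL : 0 < a L)
    (κ : ℝ) (hκ : 2 / a L < κ)
    (r : ℝ) (hr : 0 < r)
    (hfix : r = besselI 1 (κ * a L * r) / besselI 0 (κ * a L * r)) :
    let piF : ℝ → ℝ := fun θ => Real.exp (κ * a L * r * Real.cos ((L : ℝ) * θ))
      / besselI 0 (κ * a L * r)
    (∀ θ : ℝ, 0 < piF θ) ∧
    (∀ θ : ℝ, piF (-θ) = piF θ) ∧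
    Function.Periodic piF (2 * π) ∧
    ContDiff ℝ 1 piF ∧
    (1 / (2 * π)) * (∫ θ in (0:ℝ)..(2 * π), piF θ) = 1 ∧
    (∀ θ : ℝ, deriv piF θ = κ * deriv (circConv (Wfin L a) piF) θ * piF θ) ∧
    (∃ θ : ℝ, piF θ ≠ 1) :=
  kuramoto_branch_general L hL a hposL κ hκ r hr hfix
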